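/- arXiv:math/0604463 — 15 statements merged into one kernel-verified Lean document; each statement's English description precedes it below -/
import Mathlib

section
/- Let X be a real normed space containing a nonzero vector, and Y a real normed space. If c : X → Y is orthogonally constant with respect to isosceles orthogonality, then there exists a mapping g : ℝ → Y such that c(x) = g(‖x‖) for every x ∈ X. -/
/-- An orthogonally constant mapping factors through the norm. -/
theorem orthogonally_constant_factors_through_norm
    {X : Type*} [NormedAddCommGroup X] [NormedSpace ℝ X]
    {Y : Type*} [NormedAddCommGroup Y] [NormedSpace ℝ Y]
    (hX : ∃ x₀ : X, x₀ ≠ 0)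
    (c : X → Y)
    (hc : ∀ x y : X, ‖x + y‖ = ‖x - y‖ → c (x + y) = c (x - y)) :
    ∃ g : ℝ → Y, ∀ x : X, c x = g ‖x‖ := by
  obtain ⟨x₀, hx₀⟩ := hX
  have hnorm : ‖x₀‖ ≠ 0 := norm_ne_zero_iff.mpr hx₀
  -- c is constant on spheres
  have key : ∀ u v : X, ‖u‖ = ‖v‖ → c u = c v := by
    intro u v h
    have h2 : ‖((1:ℝ)/2) • (u + v) + ((1:ℝ)/2) • (u - v)‖ = ‖((1:ℝ)/2) • (u + v) - ((1:ℝ)/2) • (u - v)‖ := by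
      have e1 : ((1:ℝ)/2) • (u + v) + ((1:ℝ)/2) • (u - v) = u := by
        rw [← smul_add]; module
      have e2 : ((1:ℝ)/2) • (u + v) - ((1:ℝ)/2) • (u - v) = v := by
        rw [← smul_sub]; module
      rw [e1, e2, h]
    have := hc (((1:ℝ)/2) • (u + v)) (((1:ℝ)/2) • (u - v)) h2
    have e1 : ((1:ℝ)/2) • (u + v) + ((1:ℝ)/2) • (u - v) = u := by
      rw [← smul_add]; module
    have e2 : ((1:ℝ)/2) • (u + v) - ((1:ℝ)/2) • (u - v) = v := by
      rw [← smul_sub]; module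
    rwa [e1, e2] at this
  refine ⟨fun t => c ((t / ‖x₀‖) • x₀), fun x => ?_⟩
  apply key
  rw [norm_smul, Real.norm_eq_abs, abs_div, abs_norm, abs_norm, div_mul_cancel₀ _ hnorm]
end

section
/- Let X be a real normed space containing a nonzero vector, Y a real normed space, and ε > 0. If f : X → Y satisfies ‖f(x+y) − f(x−y)‖ ≤ ε for all x, y ∈ X with ‖x+y‖ = ‖x−y‖ (i.e., f is approximately orthogonally constant with bound ε), then there exists an orthogonally constant mapping c : X → Y (that is, c(x+y) = c(x−y) whenever ‖x+y‖ = ‖x−y‖) such that ‖f(x) − c(x)‖ ≤ ε for all x ∈ X. -/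
/-- Stability of orthogonally constant mappings: an approximately orthogonally
constant mapping is within `ε` of an orthogonally constant mapping. -/
theorem approx_orthogonally_constant_stability
    {X : Type*} [NormedAddCommGroup X] [NormedSpace ℝ X]
    {Y : Type*} [NormedAddCommGroup Y] [NormedSpace ℝ Y]
    (hX : ∃ x₀ : X, x₀ ≠ 0)
    (ε : ℝ) (hε : 0 < ε)
    (f : X → Y)
    (hf : ∀ x y : X, ‖x + y‖ = ‖x - y‖ → ‖f (x + y) - f (x - y)‖ ≤ ε) :
    ∃ c : X → Y,
      (∀ x y : X, ‖x + y‖ = ‖x - y‖ → c (x + y) = c (x - y)) ∧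
      (∀ x : X, ‖f x - c x‖ ≤ ε) := by
  obtain ⟨x₀, hx₀⟩ := hX
  set e : X := ‖x₀‖⁻¹ • x₀ with he
  have hnorme : ‖e‖ = 1 := norm_smul_inv_norm hx₀
  -- key: f differs by at most ε on any two points of equal norm
  have key : ∀ u v : X, ‖u‖ = ‖v‖ → ‖f u - f v‖ ≤ ε := by
    intro u v huv
    have h1 : ((2:ℝ)⁻¹ • (u + v)) + ((2:ℝ)⁻¹ • (u - v)) = u := by module
    have h2 : ((2:ℝ)⁻¹ • (u + v)) - ((2:ℝ)⁻¹ • (u - v)) = v := by module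
    have := hf ((2:ℝ)⁻¹ • (u + v)) ((2:ℝ)⁻¹ • (u - v)) (by rw [h1, h2]; exact huv)
    rwa [h1, h2] at this
  refine ⟨fun x => f (‖x‖ • e), ?_, ?_⟩
  · intro x y h
    simp only []
    rw [h]
  · intro x
    apply key
    rw [norm_smul, hnorme, Real.norm_eq_abs, abs_norm, mul_one]
end

section
/- Let X and Y be real normed spaces, ε > 0, and f, g, h, k : X → Y mappings satisfying ‖f(x+y) + g(x−y) − h(x) − k(y)‖ ≤ ε for all x, y ∈ X with ‖x+y‖ = ‖x−y‖. Then the odd parts satisfy ‖f^o(x+y) − g^o(x−y) − h^o(y) − k^o(x)‖ ≤ ε for all x, y ∈ X with ‖x+y‖ = ‖x−y‖, where ρ^o(x) := (ρ(x) − ρ(−x))/2. -/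
/-- Swapping the roles of `x` and `y` in the odd-part Pexider inequality. -/
theorem odd_parts_pexider_swapped
    {X : Type*} [NormedAddCommGroup X] [NormedSpace ℝ X]
    {Y : Type*} [NormedAddCommGroup Y] [NormedSpace ℝ Y]
    (ε : ℝ) (hε : 0 < ε)
    (f g h k : X → Y)
    (H : ∀ x y : X, ‖x + y‖ = ‖x - y‖ →
      ‖f (x + y) + g (x - y) - h x - k y‖ ≤ ε)
    (fo go ho ko : X → Y)
    (hfo : ∀ x, fo x = (2 : ℝ)⁻¹ • (f x - f (-x)))
    (hgo : ∀ x, go x = (2 : ℝ)⁻¹ • (g x - g (-x)))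
    (hho : ∀ x, ho x = (2 : ℝ)⁻¹ • (h x - h (-x)))
    (hko : ∀ x, ko x = (2 : ℝ)⁻¹ • (k x - k (-x))) :
    ∀ x y : X, ‖x + y‖ = ‖x - y‖ →
      ‖fo (x + y) - go (x - y) - ho y - ko x‖ ≤ ε := by
  intro x y hxy
  have e1 : y + x = x + y := add_comm _ _
  have e2 : y - x = -(x - y) := by abel
  have h1 : ‖f (x + y) + g (-(x - y)) - h y - k x‖ ≤ ε := by
    have hn : ‖y + x‖ = ‖y - x‖ := by rw [e1, e2, norm_neg, hxy]
    have := H y x hn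
    rwa [e1, e2] at this
  have e3 : -y + -x = -(x + y) := by abel
  have e4 : -y - -x = x - y := by abel
  have h2 : ‖f (-(x + y)) + g (x - y) - h (-y) - k (-x)‖ ≤ ε := by
    have hn : ‖-y + -x‖ = ‖-y - -x‖ := by rw [e3, e4, norm_neg, hxy]
    have := H (-y) (-x) hn
    rwa [e3, e4] at this
  have key : fo (x + y) - go (x - y) - ho y - ko x =
      (2 : ℝ)⁻¹ • ((f (x + y) + g (-(x - y)) - h y - k x) -
        (f (-(x + y)) + g (x - y) - h (-y) - k (-x))) := by
    rw [hfo, hgo, hho, hko]; module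
  rw [key, norm_smul]
  have h3 := norm_sub_le (f (x + y) + g (-(x - y)) - h y - k x)
    (f (-(x + y)) + g (x - y) - h (-y) - k (-x))
  simp only [Real.norm_eq_abs]
  rw [abs_of_pos (by norm_num : (0:ℝ) < (2:ℝ)⁻¹)]
  nlinarith
end

section
/- Let X and Y be real normed spaces, ε > 0, and f, g, h, k : X → Y mappings satisfying ‖f(x+y) + g(x−y) − h(x) − k(y)‖ ≤ ε for all x, y ∈ X with ‖x+y‖ = ‖x−y‖. Then ‖2f^o(x+y) − h^o(x) − k^o(x) − h^o(y) − k^o(y)‖ ≤ 2ε for all x, y ∈ X with ‖x+y‖ = ‖x−y‖, where ρ^o(x) := (ρ(x) − ρ(−x))/2. -/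
theorem two_fo_estimate
    {X : Type*} [NormedAddCommGroup X] [NormedSpace ℝ X]
    {Y : Type*} [NormedAddCommGroup Y] [NormedSpace ℝ Y]
    (ε : ℝ) (hε : 0 < ε)
    (f g h k : X → Y)
    (H : ∀ x y : X, ‖x + y‖ = ‖x - y‖ →
      ‖f (x + y) + g (x - y) - h x - k y‖ ≤ ε)
    (fo ho ko : X → Y)
    (hfo : ∀ x, fo x = (2 : ℝ)⁻¹ • (f x - f (-x)))
    (hho : ∀ x, ho x = (2 : ℝ)⁻¹ • (h x - h (-x)))
    (hko : ∀ x, ko x = (2 : ℝ)⁻¹ • (k x - k (-x))) :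
    ∀ x y : X, ‖x + y‖ = ‖x - y‖ →
      ‖2 • fo (x + y) - ho x - ko x - ho y - ko y‖ ≤ 2 * ε := by
  intro x y hxy
  have e1 : (-x) + (-y) = -(x + y) := by abel
  have e2 : (-x) - (-y) = y - x := by abel
  have e3 : (-y) + (-x) = -(x + y) := by abel
  have e4 : (-y) - (-x) = x - y := by abel
  have e5 : y + x = x + y := by abel
  have h1 := H x y hxy
  have h2 := H y x (by rw [e5, norm_sub_rev]; exact hxy)
  have h3 := H (-x) (-y) (by rw [e1, e2, norm_neg, ← norm_neg (y - x), neg_sub]; exact hxy)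
  have h4 := H (-y) (-x) (by rw [e3, e4, norm_neg]; exact hxy)
  rw [e1, e2] at h3
  rw [e3, e4] at h4
  rw [e5] at h2
  set A := f (x + y) + g (x - y) - h x - k y with hA
  set B := f (x + y) + g (y - x) - h y - k x with hB
  set C := f (-(x + y)) + g (y - x) - h (-x) - k (-y) with hC
  set D := f (-(x + y)) + g (x - y) - h (-y) - k (-x) with hD
  have key : 2 • fo (x + y) - ho x - ko x - ho y - ko y
      = (2 : ℝ)⁻¹ • (A + B - C - D) := by
    rw [hfo, hho, hho, hko, hko, hA, hB, hC, hD]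
    module
  rw [key]
  have hsum : ‖A + B - C - D‖ ≤ 4 * ε := by
    calc ‖A + B - C - D‖ ≤ ‖A + B - C‖ + ‖D‖ := norm_sub_le _ _
      _ ≤ ‖A + B‖ + ‖C‖ + ‖D‖ := by gcongr; exact norm_sub_le _ _
      _ ≤ ‖A‖ + ‖B‖ + ‖C‖ + ‖D‖ := by gcongr; exact norm_add_le _ _
      _ ≤ ε + ε + ε + ε := by gcongr
      _ = 4 * ε := by ring
  rw [norm_smul]
  have : ‖(2 : ℝ)⁻¹‖ = (2 : ℝ)⁻¹ := by norm_num
  rw [this]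
  nlinarith [hsum]
end

section
/- Let X and Y be real normed spaces, ε > 0, and f, g, h, k : X → Y mappings satisfying ‖f(x+y) + g(x−y) − h(x) − k(y)‖ ≤ ε for all x, y ∈ X with ‖x+y‖ = ‖x−y‖. Then ‖2f^o(x) − h^o(x) − k^o(x)‖ ≤ 2ε for every x ∈ X, where ρ^o(x) := (ρ(x) − ρ(−x))/2. -/
theorem two_fo_minus_ho_ko
    {X : Type*} [NormedAddCommGroup X] [NormedSpace ℝ X]
    {Y : Type*} [NormedAddCommGroup Y] [NormedSpace ℝ Y]
    (ε : ℝ) (hε : 0 < ε)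
    (f g h k : X → Y)
    (H : ∀ x y : X, ‖x + y‖ = ‖x - y‖ →
      ‖f (x + y) + g (x - y) - h x - k y‖ ≤ ε)
    (fo ho ko : X → Y)
    (hfo : ∀ x, fo x = (2 : ℝ)⁻¹ • (f x - f (-x)))
    (hho : ∀ x, ho x = (2 : ℝ)⁻¹ • (h x - h (-x)))
    (hko : ∀ x, ko x = (2 : ℝ)⁻¹ • (k x - k (-x))) :
    ∀ x : X, ‖2 • fo x - ho x - ko x‖ ≤ 2 * ε := by
  intro x
  have h1 := H 0 x (by simp)
  have h2 := H 0 (-x) (by simp)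
  have h3 := H x 0 (by simp)
  have h4 := H (-x) 0 (by simp)
  simp only [zero_add, zero_sub, add_zero, sub_zero, neg_neg, sub_neg_eq_add] at h1 h2 h3 h4
  have key : 2 • fo x - ho x - ko x =
      (2 : ℝ)⁻¹ • (((f x + g (-x) - h 0 - k x) - (f (-x) + g x - h 0 - k (-x)))
        + ((f x + g x - h x - k 0) - (f (-x) + g (-x) - h (-x) - k 0))) := by
    rw [hfo, hho, hko]
    module
  rw [key]
  have := norm_add_le ((f x + g (-x) - h 0 - k x) - (f (-x) + g x - h 0 - k (-x)))
      ((f x + g x - h x - k 0) - (f (-x) + g (-x) - h (-x) - k 0))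
  have n1 := norm_sub_le (f x + g (-x) - h 0 - k x) (f (-x) + g x - h 0 - k (-x))
  have n2 := norm_sub_le (f x + g x - h x - k 0) (f (-x) + g (-x) - h (-x) - k 0)
  rw [norm_smul]
  simp only [norm_inv, Real.norm_ofNat]
  nlinarith [norm_nonneg (f x + g (-x) - h 0 - k x)]
end

section
/- Let X and Y be real normed spaces, ε > 0, and f, g, h, k : X → Y mappings satisfying ‖f(x+y) + g(x−y) − h(x) − k(y)‖ ≤ ε for all x, y ∈ X with ‖x+y‖ = ‖x−y‖. Then the odd part f^o of f is approximately orthogonally Cauchy with bound 3ε, i.e., ‖f^o(x+y) − f^o(x) − f^o(y)‖ ≤ 3ε for all x, y ∈ X with ‖x+y‖ = ‖x−y‖, where f^o(x) := (f(x) − f(−x))/2. -/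
/-- `f^o` is approximately orthogonally Cauchy with bound `3ε`. -/
theorem fo_approx_orthogonally_cauchy
    {X : Type*} [NormedAddCommGroup X] [NormedSpace ℝ X]
    {Y : Type*} [NormedAddCommGroup Y] [NormedSpace ℝ Y]
    (ε : ℝ) (hε : 0 < ε)
    (f g h k : X → Y)
    (H : ∀ x y : X, ‖x + y‖ = ‖x - y‖ →
      ‖f (x + y) + g (x - y) - h x - k y‖ ≤ ε)
    (fo : X → Y)
    (hfo : ∀ x, fo x = (2 : ℝ)⁻¹ • (f x - f (-x))) :
    ∀ x y : X, ‖x + y‖ = ‖x - y‖ →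
      ‖fo (x + y) - fo x - fo y‖ ≤ 3 * ε := by
  intro x y hxy
  have h1 := H x y hxy
  have h2 := H y x (by rwa [add_comm, norm_sub_rev])
  have h3 := H (-x) (-y) (by
    rw [show -x + -y = -(x+y) by abel, show -x - -y = -(x-y) by abel,
      norm_neg, norm_neg]; exact hxy)
  have h4 := H (-y) (-x) (by
    rwa [show -y + -x = -(x+y) by abel, show -y - -x = x - y by abel, norm_neg])
  have h5 := H x 0 (by simp)
  have h6 := H 0 y (by simp)
  have h7 := H y 0 (by simp)
  have h8 := H 0 x (by simp)
  have h9 := H (-x) 0 (by simp)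
  have h10 := H 0 (-y) (by simp)
  have h11 := H (-y) 0 (by simp)
  have h12 := H 0 (-x) (by simp)
  simp only [add_zero, sub_zero, zero_add, zero_sub, neg_neg] at h5 h6 h7 h8 h9 h10 h11 h12
  rw [show -x + -y = -(x+y) by abel, show -x - -y = -(x-y) by abel] at h3
  rw [show -y + -x = -(x+y) by abel, show -y - -x = -(y-x) by abel] at h4
  set a := f (x + y) + g (x - y) - h x - k y with ha
  set b := f (y + x) + g (y - x) - h y - k x with hb
  set c := f (-(x + y)) + g (-(x - y)) - h (-x) - k (-y) with hc
  set d := f (-(x + y)) + g (-(y - x)) - h (-y) - k (-x) with hd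
  set p1 := f x + g x - h x - k 0 with hp1
  set q1 := f y + g (-y) - h 0 - k y with hq1
  set p2 := f y + g y - h y - k 0 with hp2
  set q2 := f x + g (-x) - h 0 - k x with hq2
  set p3 := f (-x) + g (-x) - h (-x) - k 0 with hp3
  set q3 := f (-y) + g y - h 0 - k (-y) with hq3
  set p4 := f (-y) + g (-y) - h (-y) - k 0 with hp4
  set q4 := f (-x) + g x - h 0 - k (-x) with hq4
  have key : fo (x + y) - fo x - fo y = (4 : ℝ)⁻¹ •
      (a + b - c - d - p1 - q1 - p2 - q2 + p3 + q3 + p4 + q4) := by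
    rw [hfo, hfo, hfo, ha, hb, hc, hd, hp1, hq1, hp2, hq2, hp3, hq3, hp4, hq4,
      show y + x = x + y by abel, show -(y - x) = x - y by abel,
      show -(x - y) = y - x by abel]
    module
  rw [key]
  have hb1 : ‖a + b - c - d - p1 - q1 - p2 - q2 + p3 + q3 + p4 + q4‖ ≤ 12 * ε := by
    calc ‖a + b - c - d - p1 - q1 - p2 - q2 + p3 + q3 + p4 + q4‖
        ≤ ‖a + b - c - d - p1 - q1 - p2 - q2 + p3 + q3 + p4‖ + ‖q4‖ := norm_add_le _ _
      _ ≤ ‖a + b - c - d - p1 - q1 - p2 - q2 + p3 + q3‖ + ‖p4‖ + ‖q4‖ := by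
          gcongr; exact norm_add_le _ _
      _ ≤ ‖a + b - c - d - p1 - q1 - p2 - q2 + p3‖ + ‖q3‖ + ‖p4‖ + ‖q4‖ := by
          gcongr; exact norm_add_le _ _
      _ ≤ ‖a + b - c - d - p1 - q1 - p2 - q2‖ + ‖p3‖ + ‖q3‖ + ‖p4‖ + ‖q4‖ := by
          gcongr; exact norm_add_le _ _
      _ ≤ ‖a + b - c - d - p1 - q1 - p2‖ + ‖q2‖ + ‖p3‖ + ‖q3‖ + ‖p4‖ + ‖q4‖ := by
          gcongr; exact norm_sub_le _ _
      _ ≤ ‖a + b - c - d - p1 - q1‖ + ‖p2‖ + ‖q2‖ + ‖p3‖ + ‖q3‖ + ‖p4‖ + ‖q4‖ := by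
          gcongr; exact norm_sub_le _ _
      _ ≤ ‖a + b - c - d - p1‖ + ‖q1‖ + ‖p2‖ + ‖q2‖ + ‖p3‖ + ‖q3‖ + ‖p4‖ + ‖q4‖ := by
          gcongr; exact norm_sub_le _ _
      _ ≤ ‖a + b - c - d‖ + ‖p1‖ + ‖q1‖ + ‖p2‖ + ‖q2‖ + ‖p3‖ + ‖q3‖ + ‖p4‖ + ‖q4‖ := by
          gcongr; exact norm_sub_le _ _
      _ ≤ ‖a + b - c‖ + ‖d‖ + ‖p1‖ + ‖q1‖ + ‖p2‖ + ‖q2‖ + ‖p3‖ + ‖q3‖ + ‖p4‖ + ‖q4‖ := by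
          gcongr; exact norm_sub_le _ _
      _ ≤ ‖a + b‖ + ‖c‖ + ‖d‖ + ‖p1‖ + ‖q1‖ + ‖p2‖ + ‖q2‖ + ‖p3‖ + ‖q3‖ + ‖p4‖ + ‖q4‖ := by
          gcongr; exact norm_sub_le _ _
      _ ≤ ‖a‖ + ‖b‖ + ‖c‖ + ‖d‖ + ‖p1‖ + ‖q1‖ + ‖p2‖ + ‖q2‖ + ‖p3‖ + ‖q3‖ + ‖p4‖ + ‖q4‖ := by
          gcongr; exact norm_add_le _ _
      _ ≤ 12 * ε := by linarith
  rw [norm_smul]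
  have : ‖(4 : ℝ)⁻¹‖ = (4 : ℝ)⁻¹ := by norm_num
  rw [this]
  linarith
end

section
/- Let X and Y be real normed spaces, ε > 0, and f, g, h, k : X → Y mappings satisfying ‖f(x+y) + g(x−y) − h(x) − k(y)‖ ≤ ε for all x, y ∈ X with ‖x+y‖ = ‖x−y‖. Then the odd part g^o of g is approximately orthogonally Cauchy with bound 3ε, i.e., ‖g^o(x+y) − g^o(x) − g^o(y)‖ ≤ 3ε for all x, y ∈ X with ‖x+y‖ = ‖x−y‖, where g^o(x) := (g(x) − g(−x))/2. -/
/-- `g^o` is approximately orthogonally Cauchy with bound `3ε`. -/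
theorem go_approx_orthogonally_cauchy
    {X : Type*} [NormedAddCommGroup X] [NormedSpace ℝ X]
    {Y : Type*} [NormedAddCommGroup Y] [NormedSpace ℝ Y]
    (ε : ℝ) (hε : 0 < ε)
    (f g h k : X → Y)
    (H : ∀ x y : X, ‖x + y‖ = ‖x - y‖ →
      ‖f (x + y) + g (x - y) - h x - k y‖ ≤ ε)
    (go : X → Y)
    (hgo : ∀ x, go x = (2 : ℝ)⁻¹ • (g x - g (-x))) :
    ∀ x y : X, ‖x + y‖ = ‖x - y‖ →
      ‖go (x + y) - go x - go y‖ ≤ 3 * ε := by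
  intro x y hxy
  -- twelve applications of H
  have h1 : ‖f (x - y) + g (x + y) - h x - k (-y)‖ ≤ ε := by
    have e1 : x + -y = x - y := by abel
    have e2 : x - -y = x + y := by abel
    have := H x (-y) (by rw [e1, e2]; exact hxy.symm)
    rwa [e1, e2] at this
  have h2 : ‖f (-(x - y)) + g (-(x + y)) - h (-x) - k y‖ ≤ ε := by
    have e1 : -x + y = -(x - y) := by abel
    have e2 : -x - y = -(x + y) := by abel
    have := H (-x) y (by rw [e1, e2, norm_neg, norm_neg]; exact hxy.symm)
    rwa [e1, e2] at this
  have h3 : ‖f (-(x - y)) + g (x + y) - h y - k (-x)‖ ≤ ε := by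
    have e1 : y + -x = -(x - y) := by abel
    have e2 : y - -x = x + y := by abel
    have := H y (-x) (by rw [e1, e2, norm_neg]; exact hxy.symm)
    rwa [e1, e2] at this
  have h4 : ‖f (x - y) + g (-(x + y)) - h (-y) - k x‖ ≤ ε := by
    have e1 : -y + x = x - y := by abel
    have e2 : -y - x = -(x + y) := by abel
    have := H (-y) x (by rw [e1, e2, norm_neg]; exact hxy.symm)
    rwa [e1, e2] at this
  have h5 : ‖f x + g x - h x - k 0‖ ≤ ε := by
    have := H x 0 (by rw [add_zero, sub_zero])
    rwa [add_zero, sub_zero] at this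
  have h6 : ‖f (-x) + g (-x) - h (-x) - k 0‖ ≤ ε := by
    have := H (-x) 0 (by rw [add_zero, sub_zero])
    rwa [add_zero, sub_zero] at this
  have h7 : ‖f x + g (-x) - h 0 - k x‖ ≤ ε := by
    have := H 0 x (by rw [zero_add, zero_sub, norm_neg])
    rwa [zero_add, zero_sub] at this
  have h8 : ‖f (-x) + g x - h 0 - k (-x)‖ ≤ ε := by
    have e2 : (0 : X) - -x = x := by abel
    have := H 0 (-x) (by rw [zero_add, e2, norm_neg])
    rwa [zero_add, e2] at this
  have h9 : ‖f y + g y - h y - k 0‖ ≤ ε := by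
    have := H y 0 (by rw [add_zero, sub_zero])
    rwa [add_zero, sub_zero] at this
  have h10 : ‖f (-y) + g (-y) - h (-y) - k 0‖ ≤ ε := by
    have := H (-y) 0 (by rw [add_zero, sub_zero])
    rwa [add_zero, sub_zero] at this
  have h11 : ‖f y + g (-y) - h 0 - k y‖ ≤ ε := by
    have := H 0 y (by rw [zero_add, zero_sub, norm_neg])
    rwa [zero_add, zero_sub] at this
  have h12 : ‖f (-y) + g y - h 0 - k (-y)‖ ≤ ε := by
    have e2 : (0 : X) - -y = y := by abel
    have := H 0 (-y) (by rw [zero_add, e2, norm_neg])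
    rwa [zero_add, e2] at this
  set w1 := f (x - y) + g (x + y) - h x - k (-y) with hw1
  set w2 := f (-(x - y)) + g (-(x + y)) - h (-x) - k y with hw2
  set w3 := f (-(x - y)) + g (x + y) - h y - k (-x) with hw3
  set w4 := f (x - y) + g (-(x + y)) - h (-y) - k x with hw4
  set w5 := f x + g x - h x - k 0 with hw5
  set w6 := f (-x) + g (-x) - h (-x) - k 0 with hw6
  set w7 := f x + g (-x) - h 0 - k x with hw7
  set w8 := f (-x) + g x - h 0 - k (-x) with hw8
  set w9 := f y + g y - h y - k 0 with hw9
  set w10 := f (-y) + g (-y) - h (-y) - k 0 with hw10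
  set w11 := f y + g (-y) - h 0 - k y with hw11
  set w12 := f (-y) + g y - h 0 - k (-y) with hw12
  have key : (4 : ℝ) • (go (x + y) - go x - go y) =
      (w1 - w2 + w3 - w4) - (w5 - w6 - w7 + w8) - (w9 - w10 - w11 + w12) := by
    rw [hgo, hgo, hgo, hw1, hw2, hw3, hw4, hw5, hw6, hw7, hw8, hw9, hw10, hw11, hw12]
    module
  have t1 : ‖w1 - w2 + w3 - w4‖ ≤ ε + ε + ε + ε := by
    calc ‖w1 - w2 + w3 - w4‖ ≤ ‖w1 - w2 + w3‖ + ‖w4‖ := norm_sub_le _ _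
      _ ≤ (‖w1 - w2‖ + ‖w3‖) + ‖w4‖ := by gcongr; exact norm_add_le _ _
      _ ≤ ((‖w1‖ + ‖w2‖) + ‖w3‖) + ‖w4‖ := by gcongr; exact norm_sub_le _ _
      _ ≤ ε + ε + ε + ε := by gcongr
  have t2 : ‖w5 - w6 - w7 + w8‖ ≤ ε + ε + ε + ε := by
    calc ‖w5 - w6 - w7 + w8‖ ≤ ‖w5 - w6 - w7‖ + ‖w8‖ := norm_add_le _ _
      _ ≤ (‖w5 - w6‖ + ‖w7‖) + ‖w8‖ := by gcongr; exact norm_sub_le _ _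
      _ ≤ ((‖w5‖ + ‖w6‖) + ‖w7‖) + ‖w8‖ := by gcongr; exact norm_sub_le _ _
      _ ≤ ε + ε + ε + ε := by gcongr
  have t3 : ‖w9 - w10 - w11 + w12‖ ≤ ε + ε + ε + ε := by
    calc ‖w9 - w10 - w11 + w12‖ ≤ ‖w9 - w10 - w11‖ + ‖w12‖ := norm_add_le _ _
      _ ≤ (‖w9 - w10‖ + ‖w11‖) + ‖w12‖ := by gcongr; exact norm_sub_le _ _
      _ ≤ ((‖w9‖ + ‖w10‖) + ‖w11‖) + ‖w12‖ := by gcongr; exact norm_sub_le _ _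
      _ ≤ ε + ε + ε + ε := by gcongr
  have big : ‖(4 : ℝ) • (go (x + y) - go x - go y)‖ ≤ 12 * ε := by
    rw [key]
    calc ‖(w1 - w2 + w3 - w4) - (w5 - w6 - w7 + w8) - (w9 - w10 - w11 + w12)‖
        ≤ ‖(w1 - w2 + w3 - w4) - (w5 - w6 - w7 + w8)‖ + ‖w9 - w10 - w11 + w12‖ :=
          norm_sub_le _ _
      _ ≤ (‖w1 - w2 + w3 - w4‖ + ‖w5 - w6 - w7 + w8‖) + ‖w9 - w10 - w11 + w12‖ := by
          gcongr; exact norm_sub_le _ _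
      _ ≤ 12 * ε := by linarith
  rw [norm_smul] at big
  simp only [Real.norm_ofNat] at big
  linarith
end

section
/- Let X and Y be real normed spaces, ε > 0, and f, g, h, k : X → Y mappings satisfying ‖f(x+y) + g(x−y) − h(x) − k(y)‖ ≤ ε for all x, y ∈ X with ‖x+y‖ = ‖x−y‖. Define ℓ(x) := (h(x) + k(x))/2. Then the odd part ℓ^o of ℓ is approximately orthogonally Cauchy with bound 6ε, i.e., ‖ℓ^o(x+y) − ℓ^o(x) − ℓ^o(y)‖ ≤ 6ε for all x, y ∈ X with ‖x+y‖ = ‖x−y‖, where ℓ^o(x) := (ℓ(x) − ℓ(−x))/2. -/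
private lemma four_bound {Y : Type*} [SeminormedAddGroup Y] (a b c d : Y) (ε : ℝ)
    (ha : ‖a‖ ≤ ε) (hb : ‖b‖ ≤ ε) (hc : ‖c‖ ≤ ε) (hd : ‖d‖ ≤ ε) :
    ‖a + b - c - d‖ ≤ 4 * ε := by
  have t1 : ‖a + b - c - d‖ ≤ ‖a + b - c‖ + ‖d‖ := norm_sub_le _ _
  have t2 : ‖a + b - c‖ ≤ ‖a + b‖ + ‖c‖ := norm_sub_le _ _
  have t3 : ‖a + b‖ ≤ ‖a‖ + ‖b‖ := norm_add_le _ _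
  linarith

/-- The odd part of `ℓ = (h + k)/2` is approximately orthogonally Cauchy with
bound `6ε`. -/
theorem ell_odd_approx_orthogonally_cauchy
    {X : Type*} [NormedAddCommGroup X] [NormedSpace ℝ X]
    {Y : Type*} [NormedAddCommGroup Y] [NormedSpace ℝ Y]
    (ε : ℝ) (hε : 0 < ε)
    (f g h k : X → Y)
    (H : ∀ x y : X, ‖x + y‖ = ‖x - y‖ →
      ‖f (x + y) + g (x - y) - h x - k y‖ ≤ ε)
    (ℓ ℓo : X → Y)
    (hℓ : ∀ x, ℓ x = (2 : ℝ)⁻¹ • (h x + k x))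
    (hℓo : ∀ x, ℓo x = (2 : ℝ)⁻¹ • (ℓ x - ℓ (-x))) :
    ∀ x y : X, ‖x + y‖ = ‖x - y‖ →
      ‖ℓo (x + y) - ℓo x - ℓo y‖ ≤ 6 * ε := by
  intro x y hxy
  have h1 := H x y hxy
  have h2 := H y x (by rw [add_comm, norm_sub_rev]; exact hxy)
  have h3 := H (-x) (-y) (by
    rw [show -x + -y = -(x + y) by abel, norm_neg,
        show -x - -y = -(x - y) by abel, norm_neg]; exact hxy)
  rw [show -x + -y = -(x + y) by abel, show -x - -y = y - x by abel] at h3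
  have h4 := H (-y) (-x) (by
    rw [show -y + -x = -(x + y) by abel, norm_neg,
        show -y - -x = x - y by abel]; exact hxy)
  rw [show -y + -x = -(x + y) by abel, show -y - -x = x - y by abel] at h4
  rw [show y + x = x + y by abel] at h2
  have h5 := H (x + y) 0 (by rw [add_zero, sub_zero])
  rw [add_zero, sub_zero] at h5
  have h6 := H 0 (x + y) (by rw [zero_add, zero_sub, norm_neg])
  rw [zero_add, zero_sub] at h6
  have h7 := H (-(x + y)) 0 (by rw [add_zero, sub_zero])
  rw [add_zero, sub_zero] at h7
  have h8 := H 0 (-(x + y)) (by rw [zero_add, zero_sub, neg_neg, norm_neg])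
  rw [zero_add, zero_sub, neg_neg] at h8
  set s := x + y with hs
  have key : ℓo (x + y) - ℓo x - ℓo y =
      (4 : ℝ)⁻¹ • (((f s + g (x - y) - h x - k y)
        + (f s + g (y - x) - h y - k x)
        - (f (-s) + g (y - x) - h (-x) - k (-y))
        - (f (-s) + g (x - y) - h (-y) - k (-x)))
      - ((f s + g s - h s - k 0)
        + (f s + g (-s) - h 0 - k s)
        - (f (-s) + g (-s) - h (-s) - k 0)
        - (f (-s) + g s - h 0 - k (-s)))) := by
    simp only [hℓo, hℓ, hs]
    module
  rw [key, norm_smul]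
  have b1 : ‖(f s + g (x - y) - h x - k y)
        + (f s + g (y - x) - h y - k x)
        - (f (-s) + g (y - x) - h (-x) - k (-y))
        - (f (-s) + g (x - y) - h (-y) - k (-x))‖ ≤ 4 * ε :=
    four_bound _ _ _ _ ε h1 h2 h3 h4
  have b2 : ‖(f s + g s - h s - k 0)
        + (f s + g (-s) - h 0 - k s)
        - (f (-s) + g (-s) - h (-s) - k 0)
        - (f (-s) + g s - h 0 - k (-s))‖ ≤ 4 * ε :=
    four_bound _ _ _ _ ε h5 h6 h7 h8
  have b3 := norm_sub_le ((f s + g (x - y) - h x - k y)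
        + (f s + g (y - x) - h y - k x)
        - (f (-s) + g (y - x) - h (-x) - k (-y))
        - (f (-s) + g (x - y) - h (-y) - k (-x)))
      ((f s + g s - h s - k 0)
        + (f s + g (-s) - h 0 - k s)
        - (f (-s) + g (-s) - h (-s) - k 0)
        - (f (-s) + g s - h 0 - k (-s)))
  have : ‖((4 : ℝ)⁻¹)‖ = (4 : ℝ)⁻¹ := by norm_num
  rw [this]
  nlinarith [norm_nonneg ((f s + g (x - y) - h x - k y)
        + (f s + g (y - x) - h y - k x)
        - (f (-s) + g (y - x) - h (-x) - k (-y))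
        - (f (-s) + g (x - y) - h (-y) - k (-x)))]
end

section
/- Let X and Y be real normed spaces, ε > 0, and f, g, h, k : X → Y mappings with f(0) = g(0) = h(0) = 0 satisfying ‖f(x+y) + g(x−y) − h(x) − k(y)‖ ≤ ε for all x, y ∈ X with ‖x+y‖ = ‖x−y‖. Then ‖f^e(y) + g^e(y) − k^e(y)‖ ≤ ε for every y ∈ X, where ρ^e(x) := (ρ(x) + ρ(−x))/2. -/
theorem even_parts_fe_ge_ke
    {X : Type*} [NormedAddCommGroup X] [NormedSpace ℝ X]
    {Y : Type*} [NormedAddCommGroup Y] [NormedSpace ℝ Y]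
    (ε : ℝ) (hε : 0 < ε)
    (f g h k : X → Y)
    (hf0 : f 0 = 0) (hg0 : g 0 = 0) (hh0 : h 0 = 0)
    (H : ∀ x y : X, ‖x + y‖ = ‖x - y‖ →
      ‖f (x + y) + g (x - y) - h x - k y‖ ≤ ε)
    (fe ge ke : X → Y)
    (hfe : ∀ x, fe x = (2 : ℝ)⁻¹ • (f x + f (-x)))
    (hge : ∀ x, ge x = (2 : ℝ)⁻¹ • (g x + g (-x)))
    (hke : ∀ x, ke x = (2 : ℝ)⁻¹ • (k x + k (-x))) :
    ∀ y : X, ‖fe y + ge y - ke y‖ ≤ ε := by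
  intro y
  have h1 := H 0 y (by simp)
  have h2 := H 0 (-y) (by simp [norm_neg, ← sub_eq_add_neg])
  simp only [zero_add, zero_sub, hh0, sub_zero, neg_neg] at h1 h2
  have key : fe y + ge y - ke y
      = (2 : ℝ)⁻¹ • ((f y + g (-y) - k y) + (f (-y) + g y - k (-y))) := by
    rw [hfe, hge, hke, ← smul_add, ← smul_sub]
    congr 1
    abel
  rw [key]
  calc ‖(2 : ℝ)⁻¹ • ((f y + g (-y) - k y) + (f (-y) + g y - k (-y)))‖
      = (2 : ℝ)⁻¹ * ‖(f y + g (-y) - k y) + (f (-y) + g y - k (-y))‖ := by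
        rw [norm_smul]; norm_num
    _ ≤ (2 : ℝ)⁻¹ * (ε + ε) := by
        gcongr
        exact norm_add_le_of_le h1 h2
    _ = ε := by ring
end

section
/- Let X and Y be real normed spaces, ε > 0, and f, g, h, k : X → Y mappings with f(0) = g(0) = k(0) = 0 satisfying ‖f(x+y) + g(x−y) − h(x) − k(y)‖ ≤ ε for all x, y ∈ X with ‖x+y‖ = ‖x−y‖. Then ‖f^e(x) + g^e(x) − h^e(x)‖ ≤ ε for every x ∈ X, where ρ^e(x) := (ρ(x) + ρ(−x))/2. -/
theorem even_parts_fe_ge_he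
    {X : Type*} [NormedAddCommGroup X] [NormedSpace ℝ X]
    {Y : Type*} [NormedAddCommGroup Y] [NormedSpace ℝ Y]
    (ε : ℝ) (hε : 0 < ε)
    (f g h k : X → Y)
    (hf0 : f 0 = 0) (hg0 : g 0 = 0) (hk0 : k 0 = 0)
    (H : ∀ x y : X, ‖x + y‖ = ‖x - y‖ →
      ‖f (x + y) + g (x - y) - h x - k y‖ ≤ ε)
    (fe ge he : X → Y)
    (hfe : ∀ x, fe x = (2 : ℝ)⁻¹ • (f x + f (-x)))
    (hge : ∀ x, ge x = (2 : ℝ)⁻¹ • (g x + g (-x)))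
    (hhe : ∀ x, he x = (2 : ℝ)⁻¹ • (h x + h (-x))) :
    ∀ x : X, ‖fe x + ge x - he x‖ ≤ ε := by
  intro x
  have key : ∀ z : X, ‖f z + g z - h z‖ ≤ ε := by
    intro z
    have := H z 0 (by simp)
    simpa [hk0] using this
  have hA := key x
  have hB := key (-x)
  have heq : fe x + ge x - he x
      = (2 : ℝ)⁻¹ • ((f x + g x - h x) + (f (-x) + g (-x) - h (-x))) := by
    rw [hfe, hge, hhe, ← smul_add, ← smul_sub]
    congr 1
    abel
  rw [heq]
  calc ‖(2 : ℝ)⁻¹ • ((f x + g x - h x) + (f (-x) + g (-x) - h (-x)))‖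
      = (2 : ℝ)⁻¹ * ‖(f x + g x - h x) + (f (-x) + g (-x) - h (-x))‖ := by
        rw [norm_smul]; simp
    _ ≤ (2 : ℝ)⁻¹ * (ε + ε) := by
        gcongr
        exact (norm_add_le _ _).trans (add_le_add hA hB)
    _ = ε := by ring
end

section
/- Let X and Y be real normed spaces, ε > 0, and f, g, h, k : X → Y mappings with f(0) = g(0) = h(0) = k(0) = 0 satisfying ‖f(x+y) + g(x−y) − h(x) − k(y)‖ ≤ ε for all x, y ∈ X with ‖x+y‖ = ‖x−y‖. Then ‖f^e(x+y) + g^e(x−y) − f^e(x) − g^e(x) − f^e(y) − g^e(y)‖ ≤ 3ε for all x, y ∈ X with ‖x+y‖ = ‖x−y‖, where ρ^e(x) := (ρ(x) + ρ(−x))/2. -/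
theorem even_parts_combined_estimate
    {X : Type*} [NormedAddCommGroup X] [NormedSpace ℝ X]
    {Y : Type*} [NormedAddCommGroup Y] [NormedSpace ℝ Y]
    (ε : ℝ) (hε : 0 < ε)
    (f g h k : X → Y)
    (hf0 : f 0 = 0) (hg0 : g 0 = 0) (hh0 : h 0 = 0) (hk0 : k 0 = 0)
    (H : ∀ x y : X, ‖x + y‖ = ‖x - y‖ →
      ‖f (x + y) + g (x - y) - h x - k y‖ ≤ ε)
    (fe ge : X → Y)
    (hfe : ∀ x, fe x = (2 : ℝ)⁻¹ • (f x + f (-x)))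
    (hge : ∀ x, ge x = (2 : ℝ)⁻¹ • (g x + g (-x))) :
    ∀ x y : X, ‖x + y‖ = ‖x - y‖ →
      ‖fe (x + y) + ge (x - y) - fe x - ge x - fe y - ge y‖ ≤ 3 * ε := by
  intro x y hxy
  have h1 := H x y hxy
  have h2 := H (-x) (-y) (by
    have e1 : (-x) + (-y) = -(x + y) := by abel
    have e2 : (-x) - (-y) = -(x - y) := by abel
    rw [e1, e2, norm_neg, norm_neg, hxy])
  have h3 := H x 0 (by simp)
  have h4 := H (-x) 0 (by simp)
  have h5 := H 0 y (by rw [zero_add, zero_sub, norm_neg])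
  have h6 := H 0 (-y) (by simp)
  simp only [add_zero, sub_zero, hk0, zero_add, zero_sub, hh0, neg_neg, sub_neg_eq_add] at h3 h4 h5 h6
  -- rewrite h3..h6 cleanly
  have key : fe (x + y) + ge (x - y) - fe x - ge x - fe y - ge y =
      (2 : ℝ)⁻¹ • ((f (x + y) + g (x - y) - h x - k y)
        + (f (-x + -y) + g (-x - -y) - h (-x) - k (-y))
        + (h x - (f x + g x))
        + (h (-x) - (f (-x) + g (-x)))
        + (k y - (f y + g (-y)))
        + (k (-y) - (f (-y) + g y))) := by
    rw [hfe, hfe, hfe, hge, hge, hge]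
    have e1 : -x + -y = -(x + y) := by abel
    have e2 : -x - -y = -(x - y) := by abel
    rw [e1, e2]
    module
  rw [key]
  rw [norm_smul]
  have : ‖((f (x + y) + g (x - y) - h x - k y)
        + (f (-x + -y) + g (-x - -y) - h (-x) - k (-y))
        + (h x - (f x + g x))
        + (h (-x) - (f (-x) + g (-x)))
        + (k y - (f y + g (-y)))
        + (k (-y) - (f (-y) + g y)))‖ ≤ ε + ε + ε + ε + ε + ε := by
    refine le_trans (norm_add_le _ _) (add_le_add ?_ ?_)
    · refine le_trans (norm_add_le _ _) (add_le_add ?_ ?_)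
      · refine le_trans (norm_add_le _ _) (add_le_add ?_ ?_)
        · refine le_trans (norm_add_le _ _) (add_le_add ?_ ?_)
          · exact le_trans (norm_add_le _ _) (add_le_add h1 h2)
          · rw [← norm_neg]; simpa [neg_sub] using h3
        · rw [← norm_neg]; simpa [neg_sub] using h4
      · rw [← norm_neg]; simpa [neg_sub] using h5
    · rw [← norm_neg]; simpa [neg_sub] using h6
  calc ‖((2:ℝ)⁻¹)‖ * ‖((f (x + y) + g (x - y) - h x - k y)
        + (f (-x + -y) + g (-x - -y) - h (-x) - k (-y))
        + (h x - (f x + g x))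
        + (h (-x) - (f (-x) + g (-x)))
        + (k y - (f y + g (-y)))
        + (k (-y) - (f (-y) + g y)))‖ ≤ (2:ℝ)⁻¹ * (ε + ε + ε + ε + ε + ε) := by
          rw [Real.norm_eq_abs]
          exact mul_le_mul (le_of_eq (abs_of_pos (by norm_num))) this (norm_nonneg _) (by norm_num)
    _ = 3 * ε := by ring
end

section
/- Let X and Y be real normed spaces, ε > 0, and f, g, h, k : X → Y mappings with f(0) = g(0) = h(0) = k(0) = 0 satisfying ‖f(x+y) + g(x−y) − h(x) − k(y)‖ ≤ ε for all x, y ∈ X with ‖x+y‖ = ‖x−y‖. Define v := f^e − g^e, where ρ^e(x) := (ρ(x) + ρ(−x))/2. Then v is approximately orthogonally constant with bound 6ε, i.e., ‖v(x+y) − v(x−y)‖ ≤ 6ε for all x, y ∈ X with ‖x+y‖ = ‖x−y‖. -/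
/-- `v = f^e - g^e` is approximately orthogonally constant with bound `6ε`. -/
theorem v_approx_orthogonally_constant
    {X : Type*} [NormedAddCommGroup X] [NormedSpace ℝ X]
    {Y : Type*} [NormedAddCommGroup Y] [NormedSpace ℝ Y]
    (ε : ℝ) (hε : 0 < ε)
    (f g h k : X → Y)
    (hf0 : f 0 = 0) (hg0 : g 0 = 0) (hh0 : h 0 = 0) (hk0 : k 0 = 0)
    (H : ∀ x y : X, ‖x + y‖ = ‖x - y‖ →
      ‖f (x + y) + g (x - y) - h x - k y‖ ≤ ε)
    (v : X → Y)
    (hv : ∀ x, v x = (2 : ℝ)⁻¹ • (f x + f (-x)) - (2 : ℝ)⁻¹ • (g x + g (-x))) :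
    ∀ x y : X, ‖x + y‖ = ‖x - y‖ →
      ‖v (x + y) - v (x - y)‖ ≤ 6 * ε := by
  intro x y hxy
  have hA := H x y hxy
  have hB : ‖f (x - y) + g (x + y) - h x - k (-y)‖ ≤ ε := by
    have := H x (-y) (by rw [← sub_eq_add_neg, sub_neg_eq_add]; exact hxy.symm)
    rwa [← sub_eq_add_neg, sub_neg_eq_add] at this
  have e1 : -x + y = -(x - y) := by abel
  have e2 : -x - y = -(x + y) := by abel
  have hC : ‖f (-(x - y)) + g (-(x + y)) - h (-x) - k y‖ ≤ ε := by
    have := H (-x) y (by rw [e1, e2, norm_neg, norm_neg]; exact hxy.symm)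
    rwa [e1, e2] at this
  have hD : ‖f (-(x + y)) + g (-(x - y)) - h (-x) - k (-y)‖ ≤ ε := by
    have e3 : -x + -y = -(x + y) := by abel
    have e4 : -x - -y = -(x - y) := by abel
    have := H (-x) (-y) (by rw [e3, e4, norm_neg, norm_neg]; exact hxy)
    rwa [e3, e4] at this
  have key : v (x + y) - v (x - y) = (2 : ℝ)⁻¹ •
      ((f (x + y) + g (x - y) - h x - k y)
       - (f (x - y) + g (x + y) - h x - k (-y))
       + (f (-(x + y)) + g (-(x - y)) - h (-x) - k (-y))
       - (f (-(x - y)) + g (-(x + y)) - h (-x) - k y)) := by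
    rw [hv, hv]
    module
  calc ‖v (x + y) - v (x - y)‖
      = (2 : ℝ)⁻¹ * ‖(f (x + y) + g (x - y) - h x - k y)
       - (f (x - y) + g (x + y) - h x - k (-y))
       + (f (-(x + y)) + g (-(x - y)) - h (-x) - k (-y))
       - (f (-(x - y)) + g (-(x + y)) - h (-x) - k y)‖ := by
        rw [key, norm_smul]; norm_num
    _ ≤ (2 : ℝ)⁻¹ * (ε + ε + ε + ε) := by
        gcongr
        refine le_trans (norm_sub_le _ _) ?_
        gcongr
        refine le_trans (norm_add_le _ _) ?_
        gcongr
        exact le_trans (norm_sub_le _ _) (by gcongr)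
    _ ≤ 6 * ε := by linarith
end

section
/- Let X and Y be real normed spaces, ε > 0, and f, g, h, k : X → Y mappings with f(0) = g(0) = h(0) = k(0) = 0 satisfying ‖f(x+y) + g(x−y) − h(x) − k(y)‖ ≤ ε for all x, y ∈ X with ‖x+y‖ = ‖x−y‖. Then there exist mappings C, Q, K : X → Y such that f = C + (1/2)Q + (1/2)K, where C is approximately orthogonally Cauchy with bound 3ε (‖C(x+y) − C(x) − C(y)‖ ≤ 3ε whenever ‖x+y‖ = ‖x−y‖), Q is approximately orthogonally quadratic with bound 6ε (‖Q(x+y) + Q(x−y) − 2Q(x) − 2Q(y)‖ ≤ 6ε whenever ‖x+y‖ = ‖x−y‖), and K is approximately orthogonally constant with bound 6ε (‖K(x+y) − K(x−y)‖ ≤ 6ε whenever ‖x+y‖ = ‖x−y‖). -/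
private lemma nadd {Y : Type*} [SeminormedAddCommGroup Y] {a b : Y} {r s : ℝ}
    (ha : ‖a‖ ≤ r) (hb : ‖b‖ ≤ s) : ‖a + b‖ ≤ r + s :=
  (norm_add_le a b).trans (add_le_add ha hb)

private lemma nsub {Y : Type*} [SeminormedAddCommGroup Y] {a b : Y} {r s : ℝ}
    (ha : ‖a‖ ≤ r) (hb : ‖b‖ ≤ s) : ‖a - b‖ ≤ r + s :=
  (norm_sub_le a b).trans (add_le_add ha hb)

/-- Decomposition of `f`: `f = C + ½Q + ½K` with `C` approximately orthogonally
Cauchy (bound `3ε`), `Q` approximately orthogonally quadratic (bound `6ε`), and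
`K` approximately orthogonally constant (bound `6ε`). -/
theorem f_decomposition
    {X : Type*} [NormedAddCommGroup X] [NormedSpace ℝ X]
    {Y : Type*} [NormedAddCommGroup Y] [NormedSpace ℝ Y]
    (ε : ℝ) (hε : 0 < ε)
    (f g h k : X → Y)
    (hf0 : f 0 = 0) (hg0 : g 0 = 0) (hh0 : h 0 = 0) (hk0 : k 0 = 0)
    (H : ∀ x y : X, ‖x + y‖ = ‖x - y‖ →
      ‖f (x + y) + g (x - y) - h x - k y‖ ≤ ε) :
    ∃ C Q K : X → Y,
      (∀ x : X, f x = C x + (2 : ℝ)⁻¹ • Q x + (2 : ℝ)⁻¹ • K x) ∧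
      (∀ x y : X, ‖x + y‖ = ‖x - y‖ →
        ‖C (x + y) - C x - C y‖ ≤ 3 * ε) ∧
      (∀ x y : X, ‖x + y‖ = ‖x - y‖ →
        ‖Q (x + y) + Q (x - y) - 2 • Q x - 2 • Q y‖ ≤ 6 * ε) ∧
      (∀ x y : X, ‖x + y‖ = ‖x - y‖ →
        ‖K (x + y) - K (x - y)‖ ≤ 6 * ε) := by
  refine ⟨fun u => (2:ℝ)⁻¹ • (f u - f (-u)),
          fun u => (2:ℝ)⁻¹ • (f u + f (-u) + g u + g (-u)),
          fun u => (2:ℝ)⁻¹ • (f u + f (-u) - g u - g (-u)), ?_, ?_, ?_, ?_⟩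
  · intro x
    beta_reduce
    module
  · -- C is approximately orthogonally Cauchy
    intro x y hxy
    beta_reduce
    have o1 : ‖y + x‖ = ‖y - x‖ := by rw [add_comm, norm_sub_rev]; exact hxy
    have o3 : ‖-x + -y‖ = ‖-x - -y‖ := by
      rw [show -x + -y = -(x+y) by abel, show -x - -y = -(x-y) by abel,
        norm_neg, norm_neg]; exact hxy
    have o4 : ‖-y + -x‖ = ‖-y - -x‖ := by
      rw [show -y + -x = -(x+y) by abel, show -y - -x = x - y by abel, norm_neg]; exact hxy
    have b1 := H x y hxy
    have b2 := H y x o1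
    rw [show y + x = x + y by abel, show y - x = -(x-y) by abel] at b2
    have b3 := H (-x) (-y) o3
    rw [show -x + -y = -(x+y) by abel, show -x - -y = -(x-y) by abel] at b3
    have b4 := H (-y) (-x) o4
    rw [show -y + -x = -(x+y) by abel, show -y - -x = x - y by abel] at b4
    have b5 : ‖f x + g x - h x‖ ≤ ε := by simpa [hk0] using H x 0 (by simp)
    have b5' : ‖f x + g (-x) - k x‖ ≤ ε := by simpa [hh0] using H 0 x (by simp)
    have b6 : ‖f (-x) + g (-x) - h (-x)‖ ≤ ε := by simpa [hk0] using H (-x) 0 (by simp)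
    have b6' : ‖f (-x) + g x - k (-x)‖ ≤ ε := by simpa [hh0] using H 0 (-x) (by simp)
    have b7 : ‖f y + g y - h y‖ ≤ ε := by simpa [hk0] using H y 0 (by simp)
    have b7' : ‖f y + g (-y) - k y‖ ≤ ε := by simpa [hh0] using H 0 y (by simp)
    have b8 : ‖f (-y) + g (-y) - h (-y)‖ ≤ ε := by simpa [hk0] using H (-y) 0 (by simp)
    have b8' : ‖f (-y) + g y - k (-y)‖ ≤ ε := by simpa [hh0] using H 0 (-y) (by simp)
    have hS : ‖(f (x+y) + g (x-y) - h x - k y)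
        + (f (x+y) + g (-(x-y)) - h y - k x)
        - (f (-(x+y)) + g (-(x-y)) - h (-x) - k (-y))
        - (f (-(x+y)) + g (x-y) - h (-y) - k (-x))
        - (f x + g x - h x) - (f x + g (-x) - k x)
        + (f (-x) + g (-x) - h (-x)) + (f (-x) + g x - k (-x))
        - (f y + g y - h y) - (f y + g (-y) - k y)
        + (f (-y) + g (-y) - h (-y)) + (f (-y) + g y - k (-y))‖
        ≤ ε+ε+ε+ε+ε+ε+ε+ε+ε+ε+ε+ε :=
      nadd (nadd (nsub (nsub (nadd (nadd (nsub (nsub (nsub (nsub (nadd b1 b2)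
        b3) b4) b5) b5') b6) b6') b7) b7') b8) b8'
    have key : (2:ℝ)⁻¹ • (f (x+y) - f (-(x+y))) - (2:ℝ)⁻¹ • (f x - f (-x))
        - (2:ℝ)⁻¹ • (f y - f (-y))
        = (4:ℝ)⁻¹ • ((f (x+y) + g (x-y) - h x - k y)
        + (f (x+y) + g (-(x-y)) - h y - k x)
        - (f (-(x+y)) + g (-(x-y)) - h (-x) - k (-y))
        - (f (-(x+y)) + g (x-y) - h (-y) - k (-x))
        - (f x + g x - h x) - (f x + g (-x) - k x)
        + (f (-x) + g (-x) - h (-x)) + (f (-x) + g x - k (-x))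
        - (f y + g y - h y) - (f y + g (-y) - k y)
        + (f (-y) + g (-y) - h (-y)) + (f (-y) + g y - k (-y))) := by module
    rw [key, norm_smul]
    have h4 : ‖(4:ℝ)⁻¹‖ = 4⁻¹ := by norm_num
    rw [h4]
    linarith [hS]
  · -- Q is approximately orthogonally quadratic
    intro x y hxy
    beta_reduce
    have o2 : ‖x + -y‖ = ‖x - -y‖ := by
      rw [show x + -y = x - y by abel, show x - -y = x + y by abel]; exact hxy.symm
    have o3 : ‖-x + -y‖ = ‖-x - -y‖ := by
      rw [show -x + -y = -(x+y) by abel, show -x - -y = -(x-y) by abel,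
        norm_neg, norm_neg]; exact hxy
    have o5 : ‖-x + y‖ = ‖-x - y‖ := by
      rw [show -x + y = -(x-y) by abel, show -x - y = -(x+y) by abel,
        norm_neg, norm_neg]; exact hxy.symm
    have b1 := H x y hxy
    have b3 := H (-x) (-y) o3
    rw [show -x + -y = -(x+y) by abel, show -x - -y = -(x-y) by abel] at b3
    have bA := H x (-y) o2
    rw [show x + -y = x - y by abel, show x - -y = x + y by abel] at bA
    have bB := H (-x) y o5
    rw [show -x + y = -(x-y) by abel, show -x - y = -(x+y) by abel] at bB
    have b5 : ‖f x + g x - h x‖ ≤ ε := by simpa [hk0] using H x 0 (by simp)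
    have b6 : ‖f (-x) + g (-x) - h (-x)‖ ≤ ε := by simpa [hk0] using H (-x) 0 (by simp)
    have b7' : ‖f y + g (-y) - k y‖ ≤ ε := by simpa [hh0] using H 0 y (by simp)
    have b8' : ‖f (-y) + g y - k (-y)‖ ≤ ε := by simpa [hh0] using H 0 (-y) (by simp)
    have hS : ‖(f (x+y) + g (x-y) - h x - k y)
        + (f (-(x+y)) + g (-(x-y)) - h (-x) - k (-y))
        + (f (x-y) + g (x+y) - h x - k (-y))
        + (f (-(x-y)) + g (-(x+y)) - h (-x) - k y)
        - (f x + g x - h x) - (f (-x) + g (-x) - h (-x))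
        - (f x + g x - h x) - (f (-x) + g (-x) - h (-x))
        - (f y + g (-y) - k y) - (f (-y) + g y - k (-y))
        - (f y + g (-y) - k y) - (f (-y) + g y - k (-y))‖
        ≤ ε+ε+ε+ε+ε+ε+ε+ε+ε+ε+ε+ε :=
      nsub (nsub (nsub (nsub (nsub (nsub (nsub (nsub (nadd (nadd (nadd b1
        b3) bA) bB) b5) b6) b5) b6) b7') b8') b7') b8'
    have key : (2:ℝ)⁻¹ • (f (x+y) + f (-(x+y)) + g (x+y) + g (-(x+y)))
        + (2:ℝ)⁻¹ • (f (x-y) + f (-(x-y)) + g (x-y) + g (-(x-y)))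
        - 2 • (2:ℝ)⁻¹ • (f x + f (-x) + g x + g (-x))
        - 2 • (2:ℝ)⁻¹ • (f y + f (-y) + g y + g (-y))
        = (2:ℝ)⁻¹ • ((f (x+y) + g (x-y) - h x - k y)
        + (f (-(x+y)) + g (-(x-y)) - h (-x) - k (-y))
        + (f (x-y) + g (x+y) - h x - k (-y))
        + (f (-(x-y)) + g (-(x+y)) - h (-x) - k y)
        - (f x + g x - h x) - (f (-x) + g (-x) - h (-x))
        - (f x + g x - h x) - (f (-x) + g (-x) - h (-x))
        - (f y + g (-y) - k y) - (f (-y) + g y - k (-y))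
        - (f y + g (-y) - k y) - (f (-y) + g y - k (-y))) := by module
    rw [key, norm_smul]
    have h2 : ‖(2:ℝ)⁻¹‖ = 2⁻¹ := by norm_num
    rw [h2]
    linarith [hS]
  · -- K is approximately orthogonally constant
    intro x y hxy
    beta_reduce
    have o2 : ‖x + -y‖ = ‖x - -y‖ := by
      rw [show x + -y = x - y by abel, show x - -y = x + y by abel]; exact hxy.symm
    have o3 : ‖-x + -y‖ = ‖-x - -y‖ := by
      rw [show -x + -y = -(x+y) by abel, show -x - -y = -(x-y) by abel,
        norm_neg, norm_neg]; exact hxy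
    have o5 : ‖-x + y‖ = ‖-x - y‖ := by
      rw [show -x + y = -(x-y) by abel, show -x - y = -(x+y) by abel,
        norm_neg, norm_neg]; exact hxy.symm
    have b1 := H x y hxy
    have b3 := H (-x) (-y) o3
    rw [show -x + -y = -(x+y) by abel, show -x - -y = -(x-y) by abel] at b3
    have bA := H x (-y) o2
    rw [show x + -y = x - y by abel, show x - -y = x + y by abel] at bA
    have bB := H (-x) y o5
    rw [show -x + y = -(x-y) by abel, show -x - y = -(x+y) by abel] at bB
    have hS : ‖(f (x+y) + g (x-y) - h x - k y)
        + (f (-(x+y)) + g (-(x-y)) - h (-x) - k (-y))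
        - (f (x-y) + g (x+y) - h x - k (-y))
        - (f (-(x-y)) + g (-(x+y)) - h (-x) - k y)‖
        ≤ ε+ε+ε+ε :=
      nsub (nsub (nadd b1 b3) bA) bB
    have key : (2:ℝ)⁻¹ • (f (x+y) + f (-(x+y)) - g (x+y) - g (-(x+y)))
        - (2:ℝ)⁻¹ • (f (x-y) + f (-(x-y)) - g (x-y) - g (-(x-y)))
        = (2:ℝ)⁻¹ • ((f (x+y) + g (x-y) - h x - k y)
        + (f (-(x+y)) + g (-(x-y)) - h (-x) - k (-y))
        - (f (x-y) + g (x+y) - h x - k (-y))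
        - (f (-(x-y)) + g (-(x+y)) - h (-x) - k y)) := by module
    rw [key, norm_smul]
    have h2 : ‖(2:ℝ)⁻¹‖ = 2⁻¹ := by norm_num
    rw [h2]
    linarith [hS]
end

section
/- Let X and Y be real normed spaces, ε > 0, and f, g, h, k : X → Y mappings with f(0) = g(0) = h(0) = k(0) = 0 satisfying ‖f(x+y) + g(x−y) − h(x) − k(y)‖ ≤ ε for all x, y ∈ X with ‖x+y‖ = ‖x−y‖. Then there exist mappings C, Q, K : X → Y such that g = C + (1/2)Q − (1/2)K, where C is approximately orthogonally Cauchy with bound 3ε (‖C(x+y) − C(x) − C(y)‖ ≤ 3ε whenever ‖x+y‖ = ‖x−y‖), Q is approximately orthogonally quadratic with bound 6ε (‖Q(x+y) + Q(x−y) − 2Q(x) − 2Q(y)‖ ≤ 6ε whenever ‖x+y‖ = ‖x−y‖), and K is approximately orthogonally constant with bound 6ε (‖K(x+y) − K(x−y)‖ ≤ 6ε whenever ‖x+y‖ = ‖x−y‖). -/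
/-- Decomposition of `g`: `g = C + ½Q - ½K` with `C` approximately orthogonally
Cauchy (bound `3ε`), `Q` approximately orthogonally quadratic (bound `6ε`), and
`K` approximately orthogonally constant (bound `6ε`). -/
theorem g_decomposition
    {X : Type*} [NormedAddCommGroup X] [NormedSpace ℝ X]
    {Y : Type*} [NormedAddCommGroup Y] [NormedSpace ℝ Y]
    (ε : ℝ) (hε : 0 < ε)
    (f g h k : X → Y)
    (hf0 : f 0 = 0) (hg0 : g 0 = 0) (hh0 : h 0 = 0) (hk0 : k 0 = 0)
    (H : ∀ x y : X, ‖x + y‖ = ‖x - y‖ →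
      ‖f (x + y) + g (x - y) - h x - k y‖ ≤ ε) :
    ∃ C Q K : X → Y,
      (∀ x : X, g x = C x + (2 : ℝ)⁻¹ • Q x - (2 : ℝ)⁻¹ • K x) ∧
      (∀ x y : X, ‖x + y‖ = ‖x - y‖ →
        ‖C (x + y) - C x - C y‖ ≤ 3 * ε) ∧
      (∀ x y : X, ‖x + y‖ = ‖x - y‖ →
        ‖Q (x + y) + Q (x - y) - 2 • Q x - 2 • Q y‖ ≤ 6 * ε) ∧
      (∀ x y : X, ‖x + y‖ = ‖x - y‖ →
        ‖K (x + y) - K (x - y)‖ ≤ 6 * ε) := by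
  have T : ∀ {a b : Y} {ca cb : ℝ}, ‖a‖ ≤ ca → ‖b‖ ≤ cb → ‖a + b‖ ≤ ca + cb :=
    fun {a b ca cb} ha hb => (norm_add_le a b).trans (add_le_add ha hb)
  have Ts : ∀ {a b : Y} {ca cb : ℝ}, ‖a‖ ≤ ca → ‖b‖ ≤ cb → ‖a - b‖ ≤ ca + cb :=
    fun {a b ca cb} ha hb => (norm_sub_le a b).trans (add_le_add ha hb)
  have T2 : ∀ {a : Y} {c : ℝ}, ‖a‖ ≤ c → ‖(2:ℝ) • a‖ ≤ 2 * c := by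
    intro a c ha
    rw [norm_smul]
    simp only [Real.norm_ofNat]
    nlinarith [norm_nonneg a]
  -- the P-type estimates (y = 0)
  have P : ∀ w : X, ‖f w + g w - h w‖ ≤ ε := by
    intro w
    have := H w 0 (by simp)
    simpa [hk0] using this
  -- the R-type estimates (x = 0)
  have R : ∀ w : X, ‖f w + g (-w) - k w‖ ≤ ε := by
    intro w
    have := H 0 w (by simp)
    simpa [hh0] using this
  have Rn : ∀ w : X, ‖f (-w) + g w - k (-w)‖ ≤ ε := by
    intro w
    have := R (-w)
    rwa [neg_neg] at this
  have A2 : ∀ x y : X, ‖x + y‖ = ‖x - y‖ →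
      ‖f (x - y) + g (x + y) - h x - k (-y)‖ ≤ ε := by
    intro x y hxy
    have := H x (-y) (by rw [← sub_eq_add_neg, sub_neg_eq_add]; exact hxy.symm)
    rwa [← sub_eq_add_neg, sub_neg_eq_add] at this
  have A3 : ∀ x y : X, ‖x + y‖ = ‖x - y‖ →
      ‖f (-(x + y)) + g (-(x - y)) - h (-x) - k (-y)‖ ≤ ε := by
    intro x y hxy
    have := H (-x) (-y) (by
      rw [show -x + -y = -(x+y) from by abel, show -x - -y = -(x-y) from by abel,
        norm_neg, norm_neg]; exact hxy)
    rwa [show -x + -y = -(x+y) from by abel, show -x - -y = -(x-y) from by abel] at this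
  have A4 : ∀ x y : X, ‖x + y‖ = ‖x - y‖ →
      ‖f (-(x - y)) + g (-(x + y)) - h (-x) - k y‖ ≤ ε := by
    intro x y hxy
    have := H (-x) y (by
      rw [show -x + y = -(x-y) from by abel, show -x - y = -(x+y) from by abel,
        norm_neg, norm_neg]; exact hxy.symm)
    rwa [show -x + y = -(x-y) from by abel, show -x - y = -(x+y) from by abel] at this
  have A6 : ∀ x y : X, ‖x + y‖ = ‖x - y‖ →
      ‖f (-(x - y)) + g (x + y) - h y - k (-x)‖ ≤ ε := by
    intro x y hxy
    have := H y (-x) (by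
      rw [show y + -x = -(x-y) from by abel, show y - -x = x + y from by abel,
        norm_neg]; exact hxy.symm)
    rwa [show y + -x = -(x-y) from by abel, show y - -x = x + y from by abel] at this
  have A8 : ∀ x y : X, ‖x + y‖ = ‖x - y‖ →
      ‖f (x - y) + g (-(x + y)) - h (-y) - k x‖ ≤ ε := by
    intro x y hxy
    have := H (-y) x (by
      rw [show -y + x = x - y from by abel, show -y - x = -(x+y) from by abel,
        norm_neg]; exact hxy.symm)
    rwa [show -y + x = x - y from by abel, show -y - x = -(x+y) from by abel] at this
  refine ⟨fun x => (2:ℝ)⁻¹ • (g x - g (-x)),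
          fun x => (2:ℝ)⁻¹ • (f x + g x + f (-x) + g (-x)),
          fun x => (2:ℝ)⁻¹ • (f x + f (-x) - g x - g (-x)),
          ?_, ?_, ?_, ?_⟩
  · intro x
    show g x = (2:ℝ)⁻¹ • (g x - g (-x))
        + (2:ℝ)⁻¹ • ((2:ℝ)⁻¹ • (f x + g x + f (-x) + g (-x)))
        - (2:ℝ)⁻¹ • ((2:ℝ)⁻¹ • (f x + f (-x) - g x - g (-x)))
    module
  · -- Cauchy bound for C
    intro x y hxy
    show ‖(2:ℝ)⁻¹ • (g (x+y) - g (-(x+y))) - (2:ℝ)⁻¹ • (g x - g (-x))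
        - (2:ℝ)⁻¹ • (g y - g (-y))‖ ≤ 3 * ε
    have key : (2:ℝ)⁻¹ • (g (x+y) - g (-(x+y))) - (2:ℝ)⁻¹ • (g x - g (-x))
        - (2:ℝ)⁻¹ • (g y - g (-y))
        = (4:ℝ)⁻¹ • ((f (x - y) + g (x + y) - h x - k (-y))
          - (f (-(x - y)) + g (-(x + y)) - h (-x) - k y)
          + (f (-(x - y)) + g (x + y) - h y - k (-x))
          - (f (x - y) + g (-(x + y)) - h (-y) - k x)
          - (f x + g x - h x)
          + (f (-x) + g (-x) - h (-x))
          - (f y + g y - h y)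
          + (f (-y) + g (-y) - h (-y))
          + (f x + g (-x) - k x)
          - (f (-x) + g x - k (-x))
          + (f y + g (-y) - k y)
          - (f (-y) + g y - k (-y))) := by module
    rw [key, norm_smul]
    have hE := Ts (T (Ts (T (T (Ts (T (Ts (Ts (T (Ts (A2 x y hxy) (A4 x y hxy))
      (A6 x y hxy)) (A8 x y hxy)) (P x)) (P (-x))) (P y)) (P (-y))) (R x))
      (Rn x)) (R y)) (Rn y)
    simp only [Real.norm_eq_abs] at *
    rw [abs_of_pos (by norm_num : (0:ℝ) < (4:ℝ)⁻¹)]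
    linarith
  · -- quadratic bound for Q
    intro x y hxy
    show ‖(2:ℝ)⁻¹ • (f (x+y) + g (x+y) + f (-(x+y)) + g (-(x+y)))
        + (2:ℝ)⁻¹ • (f (x-y) + g (x-y) + f (-(x-y)) + g (-(x-y)))
        - 2 • ((2:ℝ)⁻¹ • (f x + g x + f (-x) + g (-x)))
        - 2 • ((2:ℝ)⁻¹ • (f y + g y + f (-y) + g (-y)))‖ ≤ 6 * ε
    have key : (2:ℝ)⁻¹ • (f (x+y) + g (x+y) + f (-(x+y)) + g (-(x+y)))
        + (2:ℝ)⁻¹ • (f (x-y) + g (x-y) + f (-(x-y)) + g (-(x-y)))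
        - 2 • ((2:ℝ)⁻¹ • (f x + g x + f (-x) + g (-x)))
        - 2 • ((2:ℝ)⁻¹ • (f y + g y + f (-y) + g (-y)))
        = (2:ℝ)⁻¹ • ((f (x + y) + g (x - y) - h x - k y)
          + (f (x - y) + g (x + y) - h x - k (-y))
          + (f (-(x + y)) + g (-(x - y)) - h (-x) - k (-y))
          + (f (-(x - y)) + g (-(x + y)) - h (-x) - k y)
          - (2:ℝ) • (f x + g x - h x)
          - (2:ℝ) • (f (-x) + g (-x) - h (-x))
          - (2:ℝ) • (f y + g (-y) - k y)
          - (2:ℝ) • (f (-y) + g y - k (-y))) := by module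
    rw [key, norm_smul]
    have hE := Ts (Ts (Ts (Ts (T (T (T (H x y hxy) (A2 x y hxy)) (A3 x y hxy))
      (A4 x y hxy)) (T2 (P x))) (T2 (P (-x)))) (T2 (R y))) (T2 (Rn y))
    simp only [Real.norm_eq_abs] at *
    rw [abs_of_pos (by norm_num : (0:ℝ) < (2:ℝ)⁻¹)]
    linarith
  · -- constant bound for K
    intro x y hxy
    show ‖(2:ℝ)⁻¹ • (f (x+y) + f (-(x+y)) - g (x+y) - g (-(x+y)))
        - (2:ℝ)⁻¹ • (f (x-y) + f (-(x-y)) - g (x-y) - g (-(x-y)))‖ ≤ 6 * ε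
    have key : (2:ℝ)⁻¹ • (f (x+y) + f (-(x+y)) - g (x+y) - g (-(x+y)))
        - (2:ℝ)⁻¹ • (f (x-y) + f (-(x-y)) - g (x-y) - g (-(x-y)))
        = (2:ℝ)⁻¹ • ((f (x + y) + g (x - y) - h x - k y)
          - (f (x - y) + g (x + y) - h x - k (-y))
          + (f (-(x + y)) + g (-(x - y)) - h (-x) - k (-y))
          - (f (-(x - y)) + g (-(x + y)) - h (-x) - k y)) := by module
    rw [key, norm_smul]
    have hE := Ts (T (Ts (H x y hxy) (A2 x y hxy)) (A3 x y hxy)) (A4 x y hxy)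
    simp only [Real.norm_eq_abs] at *
    rw [abs_of_pos (by norm_num : (0:ℝ) < (2:ℝ)⁻¹)]
    linarith
end

section
/- Let X and Y be real normed spaces with X containing a nonzero vector, ε > 0, and f, g, h, k : X → Y mappings with f(0) = g(0) = h(0) = k(0) = 0 satisfying ‖f(x+y) + g(x−y) − h(x) − k(y)‖ ≤ ε for all x, y ∈ X with ‖x+y‖ = ‖x−y‖. Then there exists an orthogonally constant mapping c : X → Y (i.e., c(x+y) = c(x−y) whenever ‖x+y‖ = ‖x−y‖) such that ‖f^e(x) − g^e(x) − c(x)‖ ≤ 6ε for all x ∈ X, where ρ^e(x) := (ρ(x) + ρ(−x))/2. -/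
/-- There is an orthogonally constant mapping `c` within `6ε` of `f^e - g^e`. -/
theorem exists_orthogonally_constant_near_fe_sub_ge
    {X : Type*} [NormedAddCommGroup X] [NormedSpace ℝ X]
    {Y : Type*} [NormedAddCommGroup Y] [NormedSpace ℝ Y]
    (hX : ∃ x₀ : X, x₀ ≠ 0)
    (ε : ℝ) (hε : 0 < ε)
    (f g h k : X → Y)
    (hf0 : f 0 = 0) (hg0 : g 0 = 0) (hh0 : h 0 = 0) (hk0 : k 0 = 0)
    (H : ∀ x y : X, ‖x + y‖ = ‖x - y‖ →
      ‖f (x + y) + g (x - y) - h x - k y‖ ≤ ε)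
    (fe ge : X → Y)
    (hfe : ∀ x, fe x = (2 : ℝ)⁻¹ • (f x + f (-x)))
    (hge : ∀ x, ge x = (2 : ℝ)⁻¹ • (g x + g (-x))) :
    ∃ c : X → Y,
      (∀ x y : X, ‖x + y‖ = ‖x - y‖ → c (x + y) = c (x - y)) ∧
      (∀ x : X, ‖fe x - ge x - c x‖ ≤ 6 * ε) := by
  obtain ⟨x₀, hx₀⟩ := hX
  have hx₀n : (0:ℝ) < ‖x₀‖ := norm_pos_iff.mpr hx₀
  have key : ∀ u v : X, ‖u‖ = ‖v‖ →
      ‖(fe u - ge u) - (fe v - ge v)‖ ≤ 2 * ε := by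
    intro u v huv
    set m : X := (2:ℝ)⁻¹ • (u + v) with hm
    set d : X := (2:ℝ)⁻¹ • (u - v) with hd
    have hmd1 : m + d = u := by rw [hm, hd]; module
    have hmd2 : m - d = v := by rw [hm, hd]; module
    have hmd3 : (-m) + d = -v := by rw [hm, hd]; module
    have hmd4 : (-m) - d = -u := by rw [hm, hd]; module
    have hmd5 : m + (-d) = v := by rw [hm, hd]; module
    have hmd6 : m - (-d) = u := by rw [hm, hd]; module
    have hmd7 : (-m) + (-d) = -u := by rw [hm, hd]; module
    have hmd8 : (-m) - (-d) = -v := by rw [hm, hd]; module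
    have hA := H m d (by rw [hmd1, hmd2]; exact huv)
    have hC := H m (-d) (by rw [hmd5, hmd6]; exact huv.symm)
    have hB := H (-m) d (by rw [hmd3, hmd4, norm_neg, norm_neg]; exact huv.symm)
    have hD := H (-m) (-d) (by rw [hmd7, hmd8, norm_neg, norm_neg]; exact huv)
    rw [hmd1, hmd2] at hA
    rw [hmd5, hmd6] at hC
    rw [hmd3, hmd4] at hB
    rw [hmd7, hmd8] at hD
    have combo : (fe u - ge u) - (fe v - ge v) =
        (2:ℝ)⁻¹ • ((f u + g v - h m - k d) + (f (-u) + g (-v) - h (-m) - k (-d))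
          - (f v + g u - h m - k (-d)) - (f (-v) + g (-u) - h (-m) - k d)) := by
      rw [hfe u, hfe v, hge u, hge v]; module
    rw [combo, norm_smul]
    have hbig : ‖(f u + g v - h m - k d) + (f (-u) + g (-v) - h (-m) - k (-d))
          - (f v + g u - h m - k (-d)) - (f (-v) + g (-u) - h (-m) - k d)‖
        ≤ 4 * ε := by
      calc ‖(f u + g v - h m - k d) + (f (-u) + g (-v) - h (-m) - k (-d))
          - (f v + g u - h m - k (-d)) - (f (-v) + g (-u) - h (-m) - k d)‖
          ≤ ‖(f u + g v - h m - k d) + (f (-u) + g (-v) - h (-m) - k (-d))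
          - (f v + g u - h m - k (-d))‖ + ‖f (-v) + g (-u) - h (-m) - k d‖ :=
            norm_sub_le _ _
        _ ≤ (‖(f u + g v - h m - k d) + (f (-u) + g (-v) - h (-m) - k (-d))‖
            + ‖f v + g u - h m - k (-d)‖) + ‖f (-v) + g (-u) - h (-m) - k d‖ := by
            gcongr; exact norm_sub_le _ _
        _ ≤ ((‖f u + g v - h m - k d‖ + ‖f (-u) + g (-v) - h (-m) - k (-d)‖)
            + ‖f v + g u - h m - k (-d)‖) + ‖f (-v) + g (-u) - h (-m) - k d‖ := by
            gcongr; exact norm_add_le _ _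
        _ ≤ 4 * ε := by linarith
    have : ‖((2:ℝ)⁻¹)‖ = (2:ℝ)⁻¹ := by norm_num
    rw [this]
    nlinarith [norm_nonneg ((f u + g v - h m - k d) + (f (-u) + g (-v) - h (-m) - k (-d))
          - (f v + g u - h m - k (-d)) - (f (-v) + g (-u) - h (-m) - k d))]
  refine ⟨fun x => fe ((‖x‖ / ‖x₀‖) • x₀) - ge ((‖x‖ / ‖x₀‖) • x₀), ?_, ?_⟩
  · intro x y hxy
    simp only [hxy]
  · intro x
    have hnorm : ‖(‖x‖ / ‖x₀‖) • x₀‖ = ‖x‖ := by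
      rw [norm_smul, Real.norm_eq_abs, abs_of_nonneg (by positivity)]
      field_simp
    have := key x ((‖x‖ / ‖x₀‖) • x₀) hnorm.symm
    calc ‖fe x - ge x - (fe ((‖x‖ / ‖x₀‖) • x₀) - ge ((‖x‖ / ‖x₀‖) • x₀))‖
        = ‖(fe x - ge x) - (fe ((‖x‖ / ‖x₀‖) • x₀) - ge ((‖x‖ / ‖x₀‖) • x₀))‖ := rfl
      _ ≤ 2 * ε := this
      _ ≤ 6 * ε := by linarith
end
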